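/- (Asymmetric testing, necessity.) Let H_0, H_1 be measurable subsets of the set E of stationary ergodic process distributions over a finite alphabet A. If there exists an asymmetrically consistent test for H_0 against H_1, then W_ρ(H_1) = 0 for every ρ ∈ cl(H_0). -/

import Mathlib

/-!
Fix a level `α` and let `s n` be the event that the level-`α` test rejects at sample size
`n`. It is determined by the first `n` symbols, so its probability is a function of the cylinder
probabilities of length `n`, which vary continuously in the distributional distance; hence
`ρ (s n) ≤ α` for every `ρ` in the closure of `H₀`. Under every `μ ∈ H₁` the test rejects
eventually almost surely, so `μ (liminf s) = 1`, and integrating over the ergodic decomposition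
gives `W_ρ(H₁) ≤ ρ (liminf s) ≤ liminf ρ (s n) ≤ α`.

The σ-algebra on `A` is arbitrary, so word cylinders need not be measurable. A letter `a` that no
measurable set separates from another letter `b` has almost surely vanishing frequency under an
ergodic process: renaming `a` into `b` does not leave the measurable atom of a sample path, so it
cannot change the almost sure limits of the frequencies, while it adds the frequency of `a` to
that of `b`. By stationarity such letters are then null, for ergodic processes and for their
mixtures, and all word cylinders become null-measurable.
-/

open MeasureTheory Filter Topology

namespace Paper

variable {A : Type*} [Fintype A] [MeasurableSpace A]

/-- The left shift on one-sided infinite sequences. -/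
def shift (x : ℕ → A) : ℕ → A := fun n => x (n + 1)

/-- A process distribution is stationary if it is invariant under the left shift. -/
def Stationary (ρ : Measure (ℕ → A)) : Prop := Measure.map shift ρ = ρ

/-- The cylinder set of sequences starting with the word `B ∈ A^k`. -/
def wordCyl {k : ℕ} (B : Fin k → A) : Set (ℕ → A) := {x | ∀ i : Fin k, x i = B i}

open Classical in
/-- Empirical frequency `ν(X_{1..n}, B)` of the word `B ∈ A^k` in the first `n` symbols
of `x` (0 when `n < k`). -/
noncomputable def freqWord {k : ℕ} (B : Fin k → A) (n : ℕ) (x : ℕ → A) : ℝ :=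
  if k ≤ n then
    (∑ i ∈ Finset.range (n - k + 1), if (∀ j : Fin k, x (i + j) = B j) then (1 : ℝ) else 0) /
      ((n : ℝ) - k + 1)
  else 0

/-- Ergodicity: the empirical frequency of every finite word converges a.s. to a constant. -/
def ErgodicProc (ρ : Measure (ℕ → A)) : Prop :=
  ∀ (k : ℕ) (B : Fin k → A),
    ∃ c : ℝ, ∀ᵐ x ∂ρ, Tendsto (fun n => freqWord B n x) atTop (𝓝 c)

/-- A stationary ergodic process distribution. -/
def StatErg (ρ : Measure (ℕ → A)) : Prop :=
  IsProbabilityMeasure ρ ∧ Stationary ρ ∧ ErgodicProc ρ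

/-- The set `E` of stationary ergodic process distributions over the alphabet `A`. -/
def ergSet (A : Type*) [Fintype A] [MeasurableSpace A] : Set (Measure (ℕ → A)) :=
  {ρ | StatErg ρ}

/-- Weights `w_k = 1/(k(k+1))` (indexing from 0: `w_k = 1/((k+1)(k+2))`). -/
noncomputable def wt (k : ℕ) : ℝ := 1 / ((k + 1) * (k + 2))

/-- The distributional distance `d(ρ₁,ρ₂) = Σ_k w_k Σ_{B ∈ A^k} |ρ₁(B) − ρ₂(B)|`. -/
noncomputable def dd (ρ₁ ρ₂ : Measure (ℕ → A)) : ℝ :=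
  ∑' k : ℕ, wt k * ∑ B : Fin (k + 1) → A,
    |(ρ₁ (wordCyl B)).toReal - (ρ₂ (wordCyl B)).toReal|

/-- The empirical distributional distance `d̂(X_{1..n}, ρ)`. -/
noncomputable def hatd (n : ℕ) (x : ℕ → A) (ρ : Measure (ℕ → A)) : ℝ :=
  ∑' k : ℕ, wt k * ∑ B : Fin (k + 1) → A,
    |freqWord B n x - (ρ (wordCyl B)).toReal|

/-- The empirical distributional distance from a sample to a hypothesis (set of
process distributions): `d̂(X_{1..n}, H) = inf_{ρ ∈ H} d̂(X_{1..n}, ρ)`. -/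
noncomputable def hatdSet (n : ℕ) (x : ℕ → A) (H : Set (Measure (ℕ → A))) : ℝ :=
  ⨅ ρ : H, hatd n x (ρ : Measure (ℕ → A))

/-- Closure of a set of (stationary) process distributions in the topology of the
distributional distance, taken within the space `S` of stationary process distributions. -/
def closureD (H : Set (Measure (ℕ → A))) : Set (Measure (ℕ → A)) :=
  {ρ | IsProbabilityMeasure ρ ∧ Stationary ρ ∧ ∀ ε : ℝ, 0 < ε → ∃ μ ∈ H, dd ρ μ < ε}

/-- `W` is the ergodic decomposition of the stationary process distribution `ρ`:
a Borel probability measure on the space of process distributions concentrated on the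
stationary ergodic ones, with `ρ(s) = ∫ μ(s) dW(μ)` for every measurable `s`. -/
def IsErgodicDecomp (ρ : Measure (ℕ → A)) (W : Measure (Measure (ℕ → A))) : Prop :=
  IsProbabilityMeasure W ∧ W (ergSet A) = 1 ∧
    ∀ s : Set (ℕ → A), MeasurableSet s → ρ s = ∫⁻ μ, μ s ∂W

/-- A test depends, at sample size `n`, only on the first `n` symbols. -/
def FinHorizon (φ : ℕ → (ℕ → A) → Bool) : Prop :=
  ∀ n x y, (∀ i < n, x i = y i) → φ n x = φ n y

/-- Uniform consistency of a test (`false` = accept `H₀`, `true` = accept `H₁`):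
for every `α > 0`, for all large enough sample sizes, both probabilities of error are
less than `α`. -/
def UnifConsistent (φ : ℕ → (ℕ → A) → Bool) (H₀ H₁ : Set (Measure (ℕ → A))) : Prop :=
  ∀ α : ℝ, 0 < α → ∃ N : ℕ, ∀ n ≥ N,
    (∀ ρ ∈ H₀, ρ {x | φ n x = true} < ENNReal.ofReal α) ∧
    (∀ ρ ∈ H₁, ρ {x | φ n x = false} < ENNReal.ofReal α)

/-- Asymmetric (`α`-level) consistency of a family of tests `ψ α`: Type I error is always
at most `α`, and under every distribution in `H₁`, a.s. the test outputs `1` from some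
sample size on. -/
def AsymConsistent (ψ : ℝ → ℕ → (ℕ → A) → Bool) (H₀ H₁ : Set (Measure (ℕ → A))) : Prop :=
  (∀ α : ℝ, α ∈ Set.Ioo (0 : ℝ) 1 → ∀ n : ℕ, ∀ ρ ∈ H₀,
    ρ {x | ψ α n x = true} ≤ ENNReal.ofReal α) ∧
  (∀ α : ℝ, α ∈ Set.Ioo (0 : ℝ) 1 → ∀ ρ ∈ H₁,
    ∀ᵐ x ∂ρ, ∀ᶠ n in atTop, ψ α n x = true)


section Atoms

variable {X : Type*} [MeasurableSpace X]

lemma mem_measurableAtom_pi {ι : Type*} {α : ι → Type*} [∀ i, MeasurableSpace (α i)]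
    {x y : ∀ i, α i} (h : ∀ i, y i ∈ measurableAtom (x i)) : y ∈ measurableAtom x := by
  have hsymm : ∀ i, x i ∈ measurableAtom (y i) := fun i =>
    measurableAtom_eq_of_mem (h i) ▸ mem_measurableAtom_self (x i)
  let m : MeasurableSpace (∀ i, α i) :=
    { MeasurableSet' := fun s => (x ∈ s ↔ y ∈ s)
      measurableSet_empty := by simp
      measurableSet_compl := fun _ hs => not_congr hs
      measurableSet_iUnion := fun _ hs => by simpa only [Set.mem_iUnion] using exists_congr hs }
  have hle : MeasurableSpace.pi ≤ m := iSup_le fun i =>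
    MeasurableSpace.comap_le_iff_le_map.2 fun t ht =>
      ⟨mem_of_mem_measurableAtom (h i) ht, mem_of_mem_measurableAtom (hsymm i) ht⟩
  simp only [measurableAtom, Set.mem_iInter]
  exact fun s hxs hs => (hle s hs).1 hxs

lemma measurableSet_of_forall_measurableAtom_subset [Countable X] {s : Set X}
    (h : ∀ a ∈ s, measurableAtom a ⊆ s) : MeasurableSet s := by
  have : s = ⋃ a ∈ s, measurableAtom a :=
    subset_antisymm (fun a ha => Set.mem_biUnion ha (mem_measurableAtom_self a))
      (Set.iUnion₂_subset h)
  rw [this]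
  exact MeasurableSet.biUnion (Set.to_countable s) fun a _ =>
    MeasurableSet.measurableAtom_of_countable a

variable (X) in
def unseparatedPoints : Set X := {a | ∃ b ∈ measurableAtom a, b ≠ a}

lemma measurableAtom_eq_singleton {a : X} (ha : a ∉ unseparatedPoints X) :
    measurableAtom a = {a} := by
  refine subset_antisymm (fun b hb => ?_) (by simp)
  by_contra hba
  exact ha ⟨b, hb, hba⟩

lemma measurableSet_unseparatedPoints [Countable X] : MeasurableSet (unseparatedPoints X) := by
  refine measurableSet_of_forall_measurableAtom_subset fun a ⟨b, hb, hba⟩ c hc => ?_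
  by_cases h : c = a
  · exact ⟨b, h ▸ hb, h ▸ hba⟩
  · exact ⟨a, measurableAtom_eq_of_mem hc ▸ mem_measurableAtom_self a, Ne.symm h⟩

end Atoms

section Sequences

variable {X : Type*}

noncomputable def letterFreq (S : Set X) (n : ℕ) (x : ℕ → X) : ℝ :=
  (∑ i ∈ Finset.range n, S.indicator 1 (x i)) / n

lemma freqWord_fin_one (a : X) {n : ℕ} (hn : 0 < n) (x : ℕ → X) :
    freqWord (fun _ : Fin 1 => a) n x = letterFreq {a} n x := by
  classical
  rw [freqWord, if_pos (show 1 ≤ n from hn), Nat.sub_add_cancel hn, letterFreq, Nat.cast_one,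
    sub_add_cancel]
  congr 1
  refine Finset.sum_congr rfl fun i _ => ?_
  simp [Set.indicator]

lemma letterFreq_comp {Y : Type*} (f : X → Y) (S : Set Y) (n : ℕ) (x : ℕ → X) :
    letterFreq S n (f ∘ x) = letterFreq (f ⁻¹' S) n x := by
  simp only [letterFreq, Function.comp_apply, ← Set.indicator_comp_right]
  rfl

lemma letterFreq_finset (s : Finset X) (n : ℕ) (x : ℕ → X) :
    letterFreq (s : Set X) n x = ∑ a ∈ s, letterFreq {a} n x := by
  classical
  simp only [letterFreq, ← Finset.sum_div]
  rw [Finset.sum_comm]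
  congr 1
  refine Finset.sum_congr rfl fun i _ => ?_
  by_cases h : x i ∈ s <;> simp [Set.indicator, h]

lemma letterFreq_nonneg (S : Set X) (n : ℕ) (x : ℕ → X) : 0 ≤ letterFreq S n x :=
  div_nonneg (Finset.sum_nonneg fun _ _ => Set.indicator_nonneg (fun _ _ => zero_le_one) _)
    n.cast_nonneg

lemma letterFreq_le_one (S : Set X) (n : ℕ) (x : ℕ → X) : letterFreq S n x ≤ 1 := by
  refine div_le_one_of_le₀ ?_ n.cast_nonneg
  calc ∑ i ∈ Finset.range n, S.indicator 1 (x i) ≤ ∑ _i ∈ Finset.range n, (1 : ℝ) :=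
        Finset.sum_le_sum fun i _ => Set.indicator_le_self' (fun _ _ => zero_le_one) _
    _ = n := by simp

lemma measurable_letterFreq [MeasurableSpace X] {S : Set X} (hS : MeasurableSet S) (n : ℕ) :
    Measurable (letterFreq S n) :=
  (Finset.measurable_sum _ fun i _ =>
    (measurable_const.indicator hS).comp (measurable_pi_apply i)).div_const _

lemma shift_iterate_apply (i : ℕ) (x : ℕ → X) (n : ℕ) : shift^[i] x n = x (n + i) := by
  induction i generalizing x with
  | zero => rfl
  | succ i ih => rw [Function.iterate_succ_apply, ih, shift, add_assoc]

end Sequences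

section Stationary

variable {X : Type*} [MeasurableSpace X] {μ : Measure (ℕ → X)}

lemma measurable_shift : Measurable (shift : (ℕ → X) → ℕ → X) :=
  measurable_pi_lambda _ fun n => measurable_pi_apply (n + 1)

lemma Stationary.measurePreserving (h : Stationary μ) : MeasurePreserving shift μ μ :=
  ⟨measurable_shift, h⟩

lemma Stationary.measure_coord_mem (h : Stationary μ) {S : Set X} (hS : MeasurableSet S)
    (i : ℕ) : μ {x | x i ∈ S} = μ {x | x 0 ∈ S} := by
  have : {x : ℕ → X | x i ∈ S} = shift^[i] ⁻¹' {x | x 0 ∈ S} := by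
    ext x
    simp [shift_iterate_apply]
  have hS₀ : MeasurableSet {x : ℕ → X | x 0 ∈ S} := measurable_pi_apply 0 hS
  rw [this, (h.measurePreserving.iterate i).measure_preimage hS₀.nullMeasurableSet]

lemma Stationary.integral_letterFreq [IsFiniteMeasure μ] (h : Stationary μ) {S : Set X}
    (hS : MeasurableSet S) {n : ℕ} (hn : 0 < n) :
    ∫ x, letterFreq S n x ∂μ = μ.real {x | x 0 ∈ S} := by
  have hcoord : ∀ i,
      (fun x : ℕ → X => S.indicator (1 : X → ℝ) (x i)) = {x | x i ∈ S}.indicator 1 :=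
    fun i => funext fun _ => (Set.indicator_comp_right fun x : ℕ → X => x i).symm
  have hint : ∀ i, ∫ x, S.indicator 1 (x i) ∂μ = μ.real {x | x 0 ∈ S} := fun i => by
    rw [hcoord, integral_indicator_one
      (show MeasurableSet {x : ℕ → X | x i ∈ S} from measurable_pi_apply i hS),
      measureReal_def, measureReal_def, h.measure_coord_mem hS]
  have hint' : ∀ i ∈ Finset.range n, Integrable (fun x : ℕ → X => S.indicator 1 (x i)) μ :=
    fun i _ => hcoord i ▸ (integrable_const 1).indicator (measurable_pi_apply i hS)
  simp only [letterFreq, integral_div, integral_finsetSum _ hint', hint, Finset.sum_const,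
    Finset.card_range, nsmul_eq_mul]
  field_simp

lemma Stationary.measure_coord_mem_eq_zero [IsProbabilityMeasure μ] (h : Stationary μ)
    {S : Set X} (hS : MeasurableSet S)
    (hlim : ∀ᵐ x ∂μ, Tendsto (fun n => letterFreq S n x) atTop (𝓝 0)) :
    μ {x | x 0 ∈ S} = 0 := by
  have hbound : ∀ n, ∀ᵐ x ∂μ, ‖letterFreq S n x‖ ≤ 1 := fun n => ae_of_all _ fun x =>
    (Real.norm_of_nonneg (letterFreq_nonneg S n x)).trans_le (letterFreq_le_one S n x)
  have hdct := tendsto_integral_of_dominated_convergence (fun _ => 1)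
    (fun n => (measurable_letterFreq hS n).aestronglyMeasurable) (integrable_const 1) hbound hlim
  have hconst : Tendsto (fun _ : ℕ => μ.real {x | x 0 ∈ S}) atTop (𝓝 0) := by
    rw [integral_zero] at hdct
    refine hdct.congr' ?_
    filter_upwards [eventually_gt_atTop 0] with n hn using h.integral_letterFreq hS hn
  exact (measureReal_eq_zero_iff).1 (tendsto_nhds_unique tendsto_const_nhds hconst)

end Stationary

section Ergodic

variable {X : Type*} [MeasurableSpace X] {μ : Measure (ℕ → X)}

lemma ErgodicProc.exists_tendsto_letterFreq (h : ErgodicProc μ) (a : X) :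
    ∃ c, ∀ᵐ x ∂μ, Tendsto (fun n => letterFreq {a} n x) atTop (𝓝 c) := by
  obtain ⟨c, hc⟩ := h 1 fun _ => a
  refine ⟨c, hc.mono fun x hx => hx.congr' ?_⟩
  filter_upwards [eventually_gt_atTop 0] with n hn using freqWord_fin_one a hn x

lemma ErgodicProc.tendsto_letterFreq_unseparated [NeZero μ] (h : ErgodicProc μ) {a : X}
    (ha : a ∈ unseparatedPoints X) :
    ∀ᵐ x ∂μ, Tendsto (fun n => letterFreq {a} n x) atTop (𝓝 0) := by
  classical
  obtain ⟨b, hb, hba⟩ := ha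
  obtain ⟨ca, hca⟩ := h.exists_tendsto_letterFreq a
  obtain ⟨cb, hcb⟩ := h.exists_tendsto_letterFreq b
  suffices ca = 0 from this ▸ hca
  obtain ⟨s, hs_ae, hs, hconv⟩ := (hca.and hcb).exists_measurable_mem
  obtain ⟨x, hx⟩ := Filter.nonempty_of_mem hs_ae
  -- Renaming `a` to `b` keeps every symbol inside its measurable atom, hence keeps `x` in `s`.
  let f : X → X := fun c => if c = a then b else c
  have hfx : f ∘ x ∈ s := by
    refine mem_of_mem_measurableAtom (mem_measurableAtom_pi fun i => ?_) hs hx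
    by_cases hxi : x i = a
    · simpa [f, hxi] using hb
    · simp [f, hxi]
  have hpre : f ⁻¹' {b} = ↑({a, b} : Finset X) := by
    ext c
    by_cases hc : c = a <;> simp [f, hc]
  have hmerged : Tendsto (fun n => letterFreq {b} n (f ∘ x)) atTop (𝓝 (ca + cb)) := by
    simp only [letterFreq_comp, hpre, letterFreq_finset, Finset.sum_pair hba.symm]
    exact (hconv x hx).1.add (hconv x hx).2
  linarith [tendsto_nhds_unique hmerged (hconv _ hfx).2]

variable (μ) in
def AvoidsUnseparated : Prop := ∀ i, μ {x | x i ∈ unseparatedPoints X} = 0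

lemma StatErg.avoidsUnseparated [Fintype X] (h : StatErg μ) : AvoidsUnseparated μ := by
  classical
  obtain ⟨hprob, hstat, herg⟩ := h
  have hU : MeasurableSet (unseparatedPoints X) := measurableSet_unseparatedPoints
  intro i
  rw [hstat.measure_coord_mem hU i]
  refine hstat.measure_coord_mem_eq_zero hU ?_
  have hall : ∀ᵐ x ∂μ, ∀ a ∈ (unseparatedPoints X).toFinset,
      Tendsto (fun n => letterFreq {a} n x) atTop (𝓝 0) :=
    (Finset.eventually_all _).2 fun a ha =>
      herg.tendsto_letterFreq_unseparated (Set.mem_toFinset.1 ha)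
  filter_upwards [hall] with x hx
  rw [← Set.coe_toFinset (unseparatedPoints X)]
  simp_rw [letterFreq_finset]
  simpa using tendsto_finsetSum _ hx

lemma IsErgodicDecomp.avoidsUnseparated [Fintype X] {ρ : Measure (ℕ → X)}
    {W : Measure (Measure (ℕ → X))} (h : IsErgodicDecomp ρ W) : AvoidsUnseparated ρ := by
  obtain ⟨hW, hWerg, hmix⟩ := h
  intro i
  have hs : MeasurableSet {x : ℕ → X | x i ∈ unseparatedPoints X} :=
    measurable_pi_apply i measurableSet_unseparatedPoints
  have hnull : MeasurableSet
      {μ : Measure (ℕ → X) | μ {x | x i ∈ unseparatedPoints X} = 0} :=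
    Measure.measurable_coe hs (measurableSet_singleton 0)
  rw [hmix _ hs, lintegral_eq_zero_iff (Measure.measurable_coe hs)]
  refine (ae_iff_measure_eq hnull.nullMeasurableSet).2
    (le_antisymm (measure_mono (Set.subset_univ _)) ?_)
  calc W Set.univ = W (ergSet X) := by rw [hWerg, measure_univ]
    _ ≤ _ := measure_mono fun μ hμ => StatErg.avoidsUnseparated hμ i

end Ergodic

section WordCylinders

variable {X β : Type*}

open Classical in
lemma preimage_eq_biUnion_wordCyl [Fintype X] {f : (ℕ → X) → β} {n : ℕ}
    (hf : DependsOn f (Set.Iio n)) (t : Set β) :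
    f ⁻¹' t = ⋃ B ∈ Finset.univ.filter (fun B : Fin n → X => wordCyl B ⊆ f ⁻¹' t),
      wordCyl B := by
  refine subset_antisymm (fun x hx => ?_)
    (Set.iUnion₂_subset fun B hB => (Finset.mem_filter.1 hB).2)
  refine Set.mem_biUnion (x := fun i : Fin n => x i)
    (Finset.mem_filter.2 ⟨Finset.mem_univ _, ?_⟩) fun i => rfl
  intro y hy
  simpa [← hf fun i (hi : i < n) => (hy ⟨i, hi⟩).symm] using hx

lemma FinHorizon.dependsOn {φ : ℕ → (ℕ → X) → Bool} (h : FinHorizon φ) (n : ℕ) :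
    DependsOn (φ n) (Set.Iio n) :=
  fun x y hxy => h n x y hxy

variable [MeasurableSpace X] {ν ν₁ ν₂ : Measure (ℕ → X)}

lemma AvoidsUnseparated.nullMeasurableSet_coord_eq [Countable X] (h : AvoidsUnseparated ν)
    (i : ℕ) (a : X) : NullMeasurableSet {x | x i = a} ν := by
  by_cases ha : a ∈ unseparatedPoints X
  · exact .of_null (measure_mono_null (fun x (hx : x i = a) => (hx ▸ ha : x i ∈ _)) (h i))
  · have : {x : ℕ → X | x i = a} = (fun x => x i) ⁻¹' measurableAtom a := by
      rw [measurableAtom_eq_singleton ha]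
      rfl
    rw [this]
    exact (measurable_pi_apply i (MeasurableSet.measurableAtom_of_countable a)).nullMeasurableSet

lemma AvoidsUnseparated.nullMeasurableSet_wordCyl [Countable X] (h : AvoidsUnseparated ν)
    {k : ℕ} (B : Fin k → X) : NullMeasurableSet (wordCyl B) ν := by
  have : wordCyl B = ⋂ i : Fin k, {x | x i = B i} := by
    ext x
    simp [wordCyl]
  rw [this]
  exact .iInter fun i => h.nullMeasurableSet_coord_eq i (B i)

open Classical in
lemma AvoidsUnseparated.measure_preimage_eq_sum [Fintype X] (h : AvoidsUnseparated ν)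
    {f : (ℕ → X) → β} {n : ℕ} (hf : DependsOn f (Set.Iio n)) (t : Set β) :
    ν (f ⁻¹' t) = ∑ B ∈ Finset.univ.filter (fun B : Fin n → X => wordCyl B ⊆ f ⁻¹' t),
      ν (wordCyl B) := by
  conv_lhs => rw [preimage_eq_biUnion_wordCyl hf t]
  refine measure_biUnion_finset₀ (fun B _ B' _ hne => Disjoint.aedisjoint ?_)
    fun B _ => h.nullMeasurableSet_wordCyl B
  exact Set.disjoint_left.2 fun x hx hx' => hne (funext fun i => (hx i).symm.trans (hx' i))

lemma AvoidsUnseparated.sum_measure_wordCyl [Fintype X] [IsProbabilityMeasure ν]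
    (h : AvoidsUnseparated ν) (n : ℕ) : ∑ B : Fin n → X, ν (wordCyl B) = 1 := by
  classical
  have := h.measure_preimage_eq_sum ((dependsOn_const ()).mono (Set.empty_subset (Set.Iio n)))
    Set.univ
  rwa [Set.preimage_univ, measure_univ,
    Finset.filter_true_of_mem fun B _ => Set.subset_univ _, eq_comm] at this

lemma AvoidsUnseparated.toReal_measure_preimage_le [Fintype X] [IsFiniteMeasure ν₁]
    [IsFiniteMeasure ν₂] (h₁ : AvoidsUnseparated ν₁) (h₂ : AvoidsUnseparated ν₂)
    {f : (ℕ → X) → β} {n : ℕ} (hf : DependsOn f (Set.Iio n)) (t : Set β) :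
    (ν₁ (f ⁻¹' t)).toReal ≤ (ν₂ (f ⁻¹' t)).toReal +
      ∑ B : Fin n → X, |(ν₁ (wordCyl B)).toReal - (ν₂ (wordCyl B)).toReal| := by
  classical
  rw [h₁.measure_preimage_eq_sum hf, h₂.measure_preimage_eq_sum hf,
    ENNReal.toReal_sum fun _ _ => measure_ne_top _ _,
    ENNReal.toReal_sum fun _ _ => measure_ne_top _ _]
  set T := Finset.univ.filter fun B : Fin n → X => wordCyl B ⊆ f ⁻¹' t
  calc ∑ B ∈ T, (ν₁ (wordCyl B)).toReal
      ≤ ∑ B ∈ T, ((ν₂ (wordCyl B)).toReal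
          + |(ν₁ (wordCyl B)).toReal - (ν₂ (wordCyl B)).toReal|) :=
        Finset.sum_le_sum fun B _ => by
          linarith [le_abs_self ((ν₁ (wordCyl B)).toReal - (ν₂ (wordCyl B)).toReal)]
    _ ≤ _ := by
        rw [Finset.sum_add_distrib]
        exact add_le_add le_rfl (Finset.sum_le_sum_of_subset_of_nonneg (Finset.subset_univ T)
          fun B _ _ => abs_nonneg ((ν₁ (wordCyl B)).toReal - (ν₂ (wordCyl B)).toReal))

end WordCylinders

section Distance

variable {X β : Type*} [Fintype X] [MeasurableSpace X] {ρ ν₁ ν₂ : Measure (ℕ → X)}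

lemma wt_pos (k : ℕ) : 0 < wt k := by
  unfold wt
  positivity

lemma summable_wt : Summable wt := by
  refine Summable.of_nonneg_of_le (fun k => (wt_pos k).le) (fun k => ?_)
    ((summable_nat_add_iff 1).2 (Real.summable_one_div_nat_pow.2 one_lt_two))
  rw [wt, div_le_div_iff₀ (by positivity) (by positivity)]
  push_cast
  nlinarith

lemma AvoidsUnseparated.sum_abs_sub_le_two [IsProbabilityMeasure ν₁] [IsProbabilityMeasure ν₂]
    (h₁ : AvoidsUnseparated ν₁) (h₂ : AvoidsUnseparated ν₂) (n : ℕ) :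
    ∑ B : Fin n → X, |(ν₁ (wordCyl B)).toReal - (ν₂ (wordCyl B)).toReal| ≤ 2 := by
  have hsum : ∀ ν : Measure (ℕ → X), [IsProbabilityMeasure ν] → AvoidsUnseparated ν →
      ∑ B : Fin n → X, (ν (wordCyl B)).toReal = 1 := fun ν _ h => by
    rw [← ENNReal.toReal_sum fun _ _ => measure_ne_top _ _, h.sum_measure_wordCyl,
      ENNReal.toReal_one]
  calc ∑ B : Fin n → X, |(ν₁ (wordCyl B)).toReal - (ν₂ (wordCyl B)).toReal|
      ≤ ∑ B : Fin n → X, ((ν₁ (wordCyl B)).toReal + (ν₂ (wordCyl B)).toReal) :=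
        Finset.sum_le_sum fun B _ => (abs_sub _ _).trans_eq <| by
          rw [abs_of_nonneg ENNReal.toReal_nonneg, abs_of_nonneg ENNReal.toReal_nonneg]
    _ = 2 := by rw [Finset.sum_add_distrib, hsum ν₁ h₁, hsum ν₂ h₂, one_add_one_eq_two]

lemma AvoidsUnseparated.wt_mul_le_dd [IsProbabilityMeasure ν₁] [IsProbabilityMeasure ν₂]
    (h₁ : AvoidsUnseparated ν₁) (h₂ : AvoidsUnseparated ν₂) (k : ℕ) :
    wt k * ∑ B : Fin (k + 1) → X, |(ν₁ (wordCyl B)).toReal - (ν₂ (wordCyl B)).toReal|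
      ≤ dd ν₁ ν₂ := by
  have hnonneg : ∀ j, 0 ≤ wt j * ∑ B : Fin (j + 1) → X,
      |(ν₁ (wordCyl B)).toReal - (ν₂ (wordCyl B)).toReal| := fun j =>
    mul_nonneg (wt_pos j).le (Finset.sum_nonneg fun _ _ => abs_nonneg _)
  have hsummable : Summable fun j => wt j * ∑ B : Fin (j + 1) → X,
      |(ν₁ (wordCyl B)).toReal - (ν₂ (wordCyl B)).toReal| :=
    summable_wt.mul_right 2 |>.of_nonneg_of_le hnonneg fun j =>
      mul_le_mul_of_nonneg_left (h₁.sum_abs_sub_le_two h₂ (j + 1)) (wt_pos j).le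
  exact hsummable.le_tsum k fun j _ => hnonneg j

lemma measure_le_of_mem_closureD {H : Set (Measure (ℕ → X))} (hH : H ⊆ ergSet X)
    (hρ : ρ ∈ closureD H) (hρ₀ : AvoidsUnseparated ρ) {f : (ℕ → X) → β} {n : ℕ}
    (hf : DependsOn f (Set.Iio n)) {t : Set β} {c : ENNReal}
    (hc : ∀ μ ∈ H, μ (f ⁻¹' t) ≤ c) :
    ρ (f ⁻¹' t) ≤ c := by
  obtain ⟨hprob, -, hclose⟩ := hρ
  refine ENNReal.le_of_forall_pos_le_add fun ε hε _ => ?_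
  obtain ⟨μ, hμ, hdd⟩ := hclose (ε * wt n) (mul_pos hε (wt_pos n))
  have hμ₀ := (hH hμ).avoidsUnseparated
  have := (hH hμ).1
  have htv := hρ₀.toReal_measure_preimage_le hμ₀ (hf.mono (Set.Iio_subset_Iio n.le_succ)) t
  have hdist := (hρ₀.wt_mul_le_dd hμ₀ n).trans_lt hdd
  have hreal : (ρ (f ⁻¹' t)).toReal ≤ (μ (f ⁻¹' t)).toReal + ε := by
    nlinarith [wt_pos n]
  calc ρ (f ⁻¹' t) = ENNReal.ofReal (ρ (f ⁻¹' t)).toReal :=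
        (ENNReal.ofReal_toReal (measure_ne_top _ _)).symm
    _ ≤ ENNReal.ofReal ((μ (f ⁻¹' t)).toReal + ε) := ENNReal.ofReal_le_ofReal hreal
    _ = μ (f ⁻¹' t) + ε := by
        rw [ENNReal.ofReal_add ENNReal.toReal_nonneg ε.coe_nonneg,
          ENNReal.ofReal_toReal (measure_ne_top _ _), ENNReal.ofReal_coe_nnreal]
    _ ≤ c + ε := add_le_add (hc μ hμ) le_rfl

end Distance

lemma measure_liminf_le_liminf_measure {Ω : Type*} [MeasurableSpace Ω] (μ : Measure Ω)
    (s : ℕ → Set Ω) : μ (liminf s atTop) ≤ liminf (fun n => μ (s n)) atTop := by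
  have hmono : Monotone fun n => ⋂ i ≥ n, s i := fun m n hmn =>
    Set.biInter_subset_biInter_left fun i (hi : n ≤ i) => hmn.trans hi
  simp only [liminf_eq_iSup_iInf_of_nat, Set.iSup_eq_iUnion, Set.iInf_eq_iInter]
  rw [hmono.measure_iUnion]
  exact iSup_mono fun n => le_iInf₂ fun i hi => measure_mono (Set.biInter_subset_of_mem hi)

lemma le_measure_liminf_of_mixture {Ω : Type*} [MeasurableSpace Ω] {ρ : Measure Ω}
    {W : Measure (Measure Ω)} (hmix : ∀ s, MeasurableSet s → ρ s = ∫⁻ μ, μ s ∂W)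
    {H : Set (Measure Ω)} (hH : ∀ μ ∈ H, IsProbabilityMeasure μ) {s : ℕ → Set Ω}
    (hs : ∀ n, MeasurableSet (s n))
    (hae : ∀ μ ∈ H, ∀ᵐ x ∂μ, ∀ᶠ n in atTop, x ∈ s n) :
    W H ≤ ρ (liminf s atTop) := by
  have hL : MeasurableSet (liminf s atTop) := MeasurableSet.measurableSet_liminf hs
  have hfull : H ⊆ {μ | 1 ≤ μ (liminf s atTop)} := fun μ hμ => by
    have := hH μ hμ
    refine ((ae_mem_iff_measure_eq hL.nullMeasurableSet).1 ?_).trans measure_univ |>.ge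
    filter_upwards [hae μ hμ] with x hx using mem_liminf_iff_eventually_mem.2 hx
  calc W H ≤ W {μ | 1 ≤ μ (liminf s atTop)} := measure_mono hfull
    _ ≤ ∫⁻ μ, μ (liminf s atTop) ∂W := by
        simpa using mul_meas_ge_le_lintegral (Measure.measurable_coe hL) 1
    _ = ρ (liminf s atTop) := (hmix _ hL).symm

theorem asymmetric_test_necessity_general (H₀ H₁ : Set (Measure (ℕ → A)))
    (hsub₀ : H₀ ⊆ ergSet A) (hsub₁ : H₁ ⊆ ergSet A)
    (hex : ∃ ψ : ℝ → ℕ → (ℕ → A) → Bool,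
      (∀ α n, Measurable (ψ α n)) ∧ (∀ α, FinHorizon (ψ α)) ∧
      AsymConsistent ψ H₀ H₁) :
    ∀ ρ ∈ closureD H₀, ∀ W, IsErgodicDecomp ρ W → W H₁ = 0 := by
  obtain ⟨ψ, hψm, hψh, hI, hII⟩ := hex
  intro ρ hρ W hW
  have hlevel : ∀ α ∈ Set.Ioo (0 : ℝ) 1, W H₁ ≤ ENNReal.ofReal α := fun α hα => by
    let s n := ψ α n ⁻¹' {true}
    have hρs : ∀ n, ρ (s n) ≤ ENNReal.ofReal α := fun n =>
      measure_le_of_mem_closureD hsub₀ hρ hW.avoidsUnseparated ((hψh α).dependsOn n)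
        fun μ hμ => hI α hα n μ hμ
    calc W H₁ ≤ ρ (liminf s atTop) :=
          le_measure_liminf_of_mixture hW.2.2 (fun μ hμ => (hsub₁ hμ).1)
            (fun n => hψm α n (measurableSet_singleton true)) (hII α hα)
      _ ≤ liminf (fun n => ρ (s n)) atTop := measure_liminf_le_liminf_measure ρ s
      _ ≤ ENNReal.ofReal α := liminf_le_of_frequently_le' (Frequently.of_forall hρs)
  refine le_antisymm (ENNReal.le_of_forall_pos_le_add fun ε hε _ => ?_) bot_le
  calc W H₁ ≤ ENNReal.ofReal (min ε (1 / 2)) :=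
        hlevel _ ⟨lt_min hε one_half_pos, (min_le_right _ _).trans_lt one_half_lt_one⟩
    _ ≤ 0 + ε := by
        rw [zero_add, ← ENNReal.ofReal_coe_nnreal]
        exact ENNReal.ofReal_le_ofReal (min_le_left _ _)

/-- asymmetric testing, necessity. If there exists an asymmetrically
consistent test for `H₀` against `H₁`, then `W_ρ(H₁) = 0` for every `ρ ∈ cl(H₀)`. -/
theorem asymmetric_test_necessity (H₀ H₁ : Set (Measure (ℕ → A)))
    (hsub₀ : H₀ ⊆ ergSet A) (hsub₁ : H₁ ⊆ ergSet A)
    (hmeas₀ : MeasurableSet H₀) (hmeas₁ : MeasurableSet H₁)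
    (hex : ∃ ψ : ℝ → ℕ → (ℕ → A) → Bool,
      (∀ α n, Measurable (ψ α n)) ∧ (∀ α, FinHorizon (ψ α)) ∧
      AsymConsistent ψ H₀ H₁) :
    ∀ ρ ∈ closureD H₀, ∀ W, IsErgodicDecomp ρ W → W H₁ = 0 :=
  asymmetric_test_necessity_general H₀ H₁ hsub₀ hsub₁ hex

end Paper
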